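/- arXiv:1907.10972 — 2 statements merged into one kernel-verified Lean document; each statement's English description precedes it below -/
import Mathlib

section
/- Let G(λ) ∈ F(λ)^{p×m} have normal rank r and let g be any integer. If e₁ ≤ … ≤ e_r are the invariant orders of rev_g G(λ) at 0 and q₁ ≤ … ≤ q_r are the invariant orders of G(λ) at ∞, then e_i = q_i + g for every i = 1,…,r. -/
set_option synthInstance.maxHeartbeats 1000000
set_option maxHeartbeats 1000000

open Matrix

namespace RM

variable {F : Type*} [Field F]

/-- Evaluation of a rational function at a point, as numerator over denominator. -/
noncomputable def rEval (x : RatFunc F) (a : F) : F := x.num.eval a / x.denom.eval a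

/-- A rational function is defined (bounded) at a point of `F`, i.e. the denominator of its
reduced representation does not vanish there. -/
def RDefinedAt (x : RatFunc F) (a : F) : Prop := Polynomial.eval a x.denom ≠ 0

/-- The substitution `λ ↦ 1/λ` applied to a rational function. -/
noncomputable def rAtInv (x : RatFunc F) : RatFunc F :=
  Polynomial.eval₂ (algebraMap F (RatFunc F)) (RatFunc.X : RatFunc F)⁻¹ x.num /
    Polynomial.eval₂ (algebraMap F (RatFunc F)) (RatFunc.X : RatFunc F)⁻¹ x.denom

/-- The `g`-reversal `λ^g · x(1/λ)` of a rational function. -/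
noncomputable def rRev (g : ℤ) (x : RatFunc F) : RatFunc F :=
  (RatFunc.X : RatFunc F) ^ g * rAtInv x

/-- A rational function is proper. -/
def ProperR (x : RatFunc F) : Prop := x.num.degree ≤ x.denom.degree

/-- A rational function is strictly proper. -/
def StrictlyProperR (x : RatFunc F) : Prop := x.num.degree < x.denom.degree

section General

variable {ι κ : Type*} [Fintype ι] [Fintype κ] [DecidableEq ι] [DecidableEq κ]

/-- A rational matrix is defined (bounded) at a point of `F`. -/
def DefinedAt (R : Matrix ι κ (RatFunc F)) (a : F) : Prop := ∀ i j, RDefinedAt (R i j) a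

/-- Entrywise evaluation of a rational matrix at a point of `F`. -/
noncomputable def matEval (R : Matrix ι κ (RatFunc F)) (a : F) : Matrix ι κ F := fun i j =>
  rEval (R i j) a

/-- A square rational matrix is regular (invertible) at a point of `F`. -/
def RegularAt (R : Matrix ι ι (RatFunc F)) (a : F) : Prop :=
  DefinedAt R a ∧ IsUnit (matEval R a).det

/-- A square rational matrix is regular in a subset of `F`. -/
def RegularOn (R : Matrix ι ι (RatFunc F)) (S : Set F) : Prop := ∀ a ∈ S, RegularAt R a

/-- Two rational matrices of the same size are equivalent at a point of `F`. -/
def EquivAt (G H : Matrix ι κ (RatFunc F)) (a : F) : Prop :=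
  ∃ (R₁ : Matrix ι ι (RatFunc F)) (R₂ : Matrix κ κ (RatFunc F)),
    RegularAt R₁ a ∧ RegularAt R₂ a ∧ R₁ * G * R₂ = H

/-- Two rational matrices of the same size are equivalent in a subset of `F`. -/
def EquivOn (G H : Matrix ι κ (RatFunc F)) (S : Set F) : Prop :=
  ∃ (R₁ : Matrix ι ι (RatFunc F)) (R₂ : Matrix κ κ (RatFunc F)),
    RegularOn R₁ S ∧ RegularOn R₂ S ∧ R₁ * G * R₂ = H

/-- A rational matrix is proper. -/
def ProperM (R : Matrix ι κ (RatFunc F)) : Prop := ∀ i j, ProperR (R i j)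

/-- A square rational matrix is biproper: proper with a proper inverse. -/
def Biproper (R : Matrix ι ι (RatFunc F)) : Prop :=
  ProperM R ∧ ∃ S : Matrix ι ι (RatFunc F), ProperM S ∧ R * S = 1 ∧ S * R = 1

/-- Two rational matrices of the same size are equivalent at infinity
(via biproper matrices). -/
def EquivAtInf (G H : Matrix ι κ (RatFunc F)) : Prop :=
  ∃ (B₁ : Matrix ι ι (RatFunc F)) (B₂ : Matrix κ κ (RatFunc F)),
    Biproper B₁ ∧ Biproper B₂ ∧ B₁ * G * B₂ = H

/-- The `g`-reversal `λ^g · G(1/λ)` of a rational matrix. -/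
noncomputable def matRev (g : ℤ) (R : Matrix ι κ (RatFunc F)) : Matrix ι κ (RatFunc F) :=
  fun i j => rRev g (R i j)

/-- A polynomial matrix viewed as a rational matrix. -/
noncomputable def toRat (P : Matrix ι κ (Polynomial F)) : Matrix ι κ (RatFunc F) :=
  P.map (algebraMap (Polynomial F) (RatFunc F))

/-- The degree of a polynomial matrix: the maximum of the degrees of its entries. -/
noncomputable def matDeg (P : Matrix ι κ (Polynomial F)) : ℕ :=
  Finset.univ.sup fun p : ι × κ => (P p.1 p.2).natDegree

/-- The `d`-reversal `λ^d · P(1/λ)` of a polynomial matrix (entrywise reflection of the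
coefficients up to degree `d`).  For `d = matDeg P` this is the reversal `rev P`. -/
noncomputable def polyRev (d : ℕ) (P : Matrix ι κ (Polynomial F)) : Matrix ι κ (Polynomial F) :=
  fun i j => (P i j).reflect d

/-- Entrywise evaluation of a polynomial matrix at a point of `F`. -/
noncomputable def polyEval (P : Matrix ι κ (Polynomial F)) (a : F) : Matrix ι κ F :=
  fun i j => (P i j).eval a

/-- A rational matrix is a polynomial matrix. -/
def IsPolyM (R : Matrix ι κ (RatFunc F)) : Prop := ∀ i j, (R i j).denom = 1

/-- A rational matrix is a matrix pencil (a polynomial matrix of degree at most 1). -/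
def IsPencilM (R : Matrix ι κ (RatFunc F)) : Prop :=
  ∀ i j, (R i j).denom = 1 ∧ (R i j).num.degree ≤ 1

/-- A polynomial matrix is a matrix pencil (degree at most 1). -/
def IsPencilP (P : Matrix ι κ (Polynomial F)) : Prop := ∀ i j, (P i j).degree ≤ 1

/-- The matrix pencil `M1 · λ + M0` built from two constant matrices. -/
noncomputable def pencil (M1 M0 : Matrix ι κ F) : Matrix ι κ (Polynomial F) := fun i j =>
  Polynomial.C (M1 i j) * Polynomial.X + Polynomial.C (M0 i j)

/-- The polynomial part of a rational matrix (entrywise Euclidean quotient). -/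
noncomputable def polyPartM (G : Matrix ι κ (RatFunc F)) : Matrix ι κ (Polynomial F) :=
  fun i j => (G i j).num / (G i j).denom

/-- A rational matrix is strictly proper. -/
def StrictlyProperM (G : Matrix ι κ (RatFunc F)) : Prop := ∀ i j, StrictlyProperR (G i j)

open Classical in
/-- The grade used in the reversal `rev G` of a rational matrix: the degree of its polynomial
part if `G` is not strictly proper, and `0` otherwise. -/
noncomputable def revGrade (G : Matrix ι κ (RatFunc F)) : ℕ :=
  if StrictlyProperM G then 0 else matDeg (polyPartM G)

end General

/-- `(λ - a)^k`, for an integer `k`, as a rational function. -/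
noncomputable def localPow (a : F) (k : ℤ) : RatFunc F :=
  (algebraMap (Polynomial F) (RatFunc F) (Polynomial.X - Polynomial.C a)) ^ k

/-- The local Smith–McMillan diagonal form at `a` with invariant orders `ν`. -/
noncomputable def localDiag (p m : ℕ) (a : F) {r : ℕ} (ν : Fin r → ℤ) :
    Matrix (Fin p) (Fin m) (RatFunc F) := fun i j =>
  if h : (i : ℕ) = (j : ℕ) ∧ (j : ℕ) < r then localPow a (ν ⟨(j : ℕ), h.2⟩) else 0

/-- The Smith–McMillan diagonal form at infinity with invariant orders `μ`,
with diagonal entries `λ^(-μ i)`. -/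
noncomputable def infDiag (p m : ℕ) {r : ℕ} (μ : Fin r → ℤ) :
    Matrix (Fin p) (Fin m) (RatFunc F) := fun i j =>
  if h : (i : ℕ) = (j : ℕ) ∧ (j : ℕ) < r then (RatFunc.X : RatFunc F) ^ (-(μ ⟨(j : ℕ), h.2⟩))
  else 0

/-- `ν` is the (monotone) tuple of invariant orders of `G` at the point `a ∈ F`. -/
def IsInvOrdersAt {p m : ℕ} (G : Matrix (Fin p) (Fin m) (RatFunc F)) (a : F) {r : ℕ}
    (ν : Fin r → ℤ) : Prop :=
  r = G.rank ∧ Monotone ν ∧ EquivAt G (localDiag p m a ν) a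

/-- `μ` is the (monotone) tuple of invariant orders of `G` at infinity. -/
def IsInvOrdersAtInf {p m : ℕ} (G : Matrix (Fin p) (Fin m) (RatFunc F)) {r : ℕ}
    (μ : Fin r → ℤ) : Prop :=
  r = G.rank ∧ Monotone μ ∧ EquivAtInf G (infDiag p m μ)

/-- The multiset of values of a tuple of invariant orders. -/
def ordMS {r : ℕ} (ν : Fin r → ℤ) : Multiset ℤ := Multiset.map ν Finset.univ.val

/-- The multiset of pole partial multiplicities (exponents of the pole elementary divisors):
the negatives of the negative invariant orders. -/
def poleMS {r : ℕ} (ν : Fin r → ℤ) : Multiset ℤ :=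
  Multiset.map (fun x => -x) ((ordMS ν).filter fun x => x < 0)

/-- The multiset of zero partial multiplicities (exponents of the zero elementary divisors):
the positive invariant orders. -/
def zeroMS {r : ℕ} (ν : Fin r → ℤ) : Multiset ℤ := (ordMS ν).filter fun x => 0 < x

/-- `E` is the multiset of partial multiplicities (exponents of the elementary divisors) of the
polynomial matrix `P` at `a`. -/
def IsElemDivExps {p m : ℕ} (P : Matrix (Fin p) (Fin m) (Polynomial F)) (a : F)
    (E : Multiset ℤ) : Prop :=
  ∃ (s : ℕ) (μ : Fin s → ℤ), IsInvOrdersAt (toRat P) a μ ∧ E = zeroMS μ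

/-- The polynomial system matrix `[[A, B], [-C, D]]`. -/
noncomputable def sysMat {n q r : ℕ} (A : Matrix (Fin n) (Fin n) (Polynomial F))
    (B : Matrix (Fin n) (Fin r) (Polynomial F)) (C : Matrix (Fin q) (Fin n) (Polynomial F))
    (D : Matrix (Fin q) (Fin r) (Polynomial F)) :
    Matrix (Fin (n + q)) (Fin (n + r)) (Polynomial F) :=
  Matrix.reindex finSumFinEquiv finSumFinEquiv (Matrix.fromBlocks A B (-C) D)

/-- The transfer function matrix `D + C A⁻¹ B` of the polynomial system matrix
`[[A, B], [-C, D]]`. -/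
noncomputable def transferFn {n q r : ℕ} (A : Matrix (Fin n) (Fin n) (Polynomial F))
    (B : Matrix (Fin n) (Fin r) (Polynomial F)) (C : Matrix (Fin q) (Fin n) (Polynomial F))
    (D : Matrix (Fin q) (Fin r) (Polynomial F)) : Matrix (Fin q) (Fin r) (RatFunc F) :=
  toRat D + toRat C * (toRat A)⁻¹ * toRat B

/-- The polynomial system matrix with blocks `A, B, C` is minimal at `a ∈ F`:
`[A(a); C(a)]` and `[A(a) B(a)]` both have rank `n`. -/
def MinimalAt {n q r : ℕ} (A : Matrix (Fin n) (Fin n) (Polynomial F))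
    (B : Matrix (Fin n) (Fin r) (Polynomial F)) (C : Matrix (Fin q) (Fin n) (Polynomial F))
    (a : F) : Prop :=
  (Matrix.fromRows (polyEval A a) (polyEval C a)).rank = n ∧
    (Matrix.fromCols (polyEval A a) (polyEval B a)).rank = n

/-- The polynomial system matrix with blocks `A, B, C` is minimal in a subset of `F`. -/
def MinimalOn {n q r : ℕ} (A : Matrix (Fin n) (Fin n) (Polynomial F))
    (B : Matrix (Fin n) (Fin r) (Polynomial F)) (C : Matrix (Fin q) (Fin n) (Polynomial F))
    (S : Set F) : Prop := ∀ a ∈ S, MinimalAt A B C a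

/-- `diag(G, I_s)`. -/
noncomputable def diagPad {p m : ℕ} (G : Matrix (Fin p) (Fin m) (RatFunc F)) (s : ℕ) :
    Matrix (Fin (p + s)) (Fin (m + s)) (RatFunc F) :=
  Matrix.reindex finSumFinEquiv finSumFinEquiv
    (Matrix.fromBlocks G 0 0 (1 : Matrix (Fin s) (Fin s) (RatFunc F)))

/-- The polynomial system matrix `[[A, B], [-C, D]]` (of size `(n+q) × (n+r)`, with state
matrix `A`) is a (local) linearization of the rational matrix `G` (of size `p × m`)
at the point `a ∈ F`. -/
def IsLinearizationAt {n q r p m : ℕ} (A : Matrix (Fin n) (Fin n) (Polynomial F))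
    (B : Matrix (Fin n) (Fin r) (Polynomial F)) (C : Matrix (Fin q) (Fin n) (Polynomial F))
    (D : Matrix (Fin q) (Fin r) (Polynomial F)) (G : Matrix (Fin p) (Fin m) (RatFunc F))
    (a : F) : Prop :=
  MinimalAt A B C a ∧
    ∃ (s₁ s₂ : ℕ) (h₁ : p + s₁ = q + s₂) (h₂ : m + s₁ = r + s₂),
      ∃ (R₁ : Matrix (Fin (q + s₂)) (Fin (q + s₂)) (RatFunc F))
        (R₂ : Matrix (Fin (r + s₂)) (Fin (r + s₂)) (RatFunc F)),
        RegularAt R₁ a ∧ RegularAt R₂ a ∧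
          R₁ * Matrix.reindex (finCongr h₁) (finCongr h₂) (diagPad G s₁) * R₂ =
            diagPad (transferFn A B C D) s₂

/-- Linearization in a subset of `F`: linearization at every point of the subset. -/
def IsLinearizationOn {n q r p m : ℕ} (A : Matrix (Fin n) (Fin n) (Polynomial F))
    (B : Matrix (Fin n) (Fin r) (Polynomial F)) (C : Matrix (Fin q) (Fin n) (Polynomial F))
    (D : Matrix (Fin q) (Fin r) (Polynomial F)) (G : Matrix (Fin p) (Fin m) (RatFunc F))
    (S : Set F) : Prop :=
  ∀ a ∈ S, IsLinearizationAt A B C D G a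

/-- The polynomial system matrix `L = [[A, B], [-C, D]]` is a linearization of the rational
matrix `G` at infinity of grade `g`:  `rev L` is minimal at `0` and
`diag(rev_g G, I_{s₁})` is equivalent at `0` to `diag(rev_ℓ Ĝ, I_{s₂})`, where
`ℓ = deg L` and `Ĝ` is the transfer function matrix of `L`. -/
def IsLinearizationAtInf {n q r p m : ℕ} (A : Matrix (Fin n) (Fin n) (Polynomial F))
    (B : Matrix (Fin n) (Fin r) (Polynomial F)) (C : Matrix (Fin q) (Fin n) (Polynomial F))
    (D : Matrix (Fin q) (Fin r) (Polynomial F)) (G : Matrix (Fin p) (Fin m) (RatFunc F))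
    (g : ℤ) : Prop :=
  MinimalAt (polyRev (matDeg (sysMat A B C D)) A) (polyRev (matDeg (sysMat A B C D)) B)
      (polyRev (matDeg (sysMat A B C D)) C) (0 : F) ∧
    ∃ (s₁ s₂ : ℕ) (h₁ : p + s₁ = q + s₂) (h₂ : m + s₁ = r + s₂),
      ∃ (Q₁ : Matrix (Fin (q + s₂)) (Fin (q + s₂)) (RatFunc F))
        (Q₂ : Matrix (Fin (r + s₂)) (Fin (r + s₂)) (RatFunc F)),
        RegularAt Q₁ 0 ∧ RegularAt Q₂ 0 ∧
          Q₁ * Matrix.reindex (finCongr h₁) (finCongr h₂) (diagPad (matRev g G) s₁) * Q₂ =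
            diagPad (matRev ((matDeg (sysMat A B C D) : ℕ) : ℤ) (transferFn A B C D)) s₂

/-- `g`-strong linearization: a linearization in `F` which is also a linearization at
infinity of grade `g`. -/
def IsStrongLinearization {n q r p m : ℕ} (A : Matrix (Fin n) (Fin n) (Polynomial F))
    (B : Matrix (Fin n) (Fin r) (Polynomial F)) (C : Matrix (Fin q) (Fin n) (Polynomial F))
    (D : Matrix (Fin q) (Fin r) (Polynomial F)) (G : Matrix (Fin p) (Fin m) (RatFunc F))
    (g : ℤ) : Prop :=
  IsLinearizationOn A B C D G Set.univ ∧ IsLinearizationAtInf A B C D G g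

/-- A rational matrix has full row rank at `a ∈ F`. -/
def FullRowRankAt {p m : ℕ} (R : Matrix (Fin p) (Fin m) (RatFunc F)) (a : F) : Prop :=
  DefinedAt R a ∧ (matEval R a).rank = p

/-- A rational matrix has full row rank in a subset of `F`. -/
def FullRowRankOn {p m : ℕ} (R : Matrix (Fin p) (Fin m) (RatFunc F)) (S : Set F) : Prop :=
  ∀ a ∈ S, FullRowRankAt R a

/-- The `i`-th row degree of a polynomial matrix. -/
noncomputable def rowDegM {p m : ℕ} (K : Matrix (Fin p) (Fin m) (Polynomial F)) (i : Fin p) :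
    ℕ := Finset.univ.sup fun j => (K i j).natDegree

/-- The highest row degree coefficient matrix of a polynomial matrix. -/
noncomputable def hrdMat {p m : ℕ} (K : Matrix (Fin p) (Fin m) (Polynomial F)) :
    Matrix (Fin p) (Fin m) F := fun i j => (K i j).coeff (rowDegM K i)

/-- A polynomial matrix is a minimal basis: full row rank at every point of `F` and
row reduced. -/
def IsMinimalBasis {p m : ℕ} (K : Matrix (Fin p) (Fin m) (Polynomial F)) : Prop :=
  (∀ a : F, (polyEval K a).rank = p) ∧ (hrdMat K).rank = p

end RM

/-!
Substituting `λ ↦ 1/λ` sends proper rational functions to rational functions defined at `0`, so it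
turns biproper matrices into matrices regular at `0`. Applied to `B₁ G B₂ = diag(λ^(-qᵢ))` and
multiplied by `λ^g`, it shows that `rev_g G` is equivalent at `0` to `diag(λ^(qᵢ + g))`; it remains
to show that the local diagonal form at a point `a` is unique.

After multiplying by a power of `λ - a` all orders are natural numbers. The rational functions
defined at `a` form the localization of `F[λ]` at the polynomials not vanishing at `a`, which maps
to `F[λ]/(λ^t)` by sending `λ - a` to the nilpotent `λ`. Regarding a matrix over this quotient as
an `F`-matrix of `t` times the size, equivalent local forms give `F`-matrices of equal rank, and
for `diag((λ - a)^bᵢ)` this rank is `∑ᵢ max(t - bᵢ, 0)`. These numbers for all `t` determine the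
nondecreasing tuple `b`.
-/

namespace Matrix

variable {ι κ ρ ν : Type*}

theorem comp_mul {R : Type*} [NonUnitalNonAssocSemiring R] [Fintype κ] [Fintype ν]
    (M : Matrix ι κ (Matrix ν ν R)) (N : Matrix κ ρ (Matrix ν ν R)) :
    comp ι ρ ν ν R (M * N) = comp ι κ ν ν R M * comp κ ρ ν ν R N := by
  ext ⟨i, k⟩ ⟨j, l⟩
  simp only [comp_apply, mul_apply, sum_apply, Fintype.sum_prod_type]

theorem rank_eq_card_of_col_eq_single {F : Type*} [Field F] [Finite ι] [Fintype κ]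
    [DecidableEq ι] {σ : Type*} [Fintype σ] (M : Matrix ι κ F) (row : σ → ι) (col : σ → κ)
    (hrow : Function.Injective row) (hcol : ∀ x, M.col (col x) = Pi.single (row x) 1)
    (hzero : ∀ j ∉ Set.range col, M.col j = 0) : M.rank = Fintype.card σ := by
  have hspan : Submodule.span F (Set.range M.col) =
      Submodule.span F (Set.range fun x => (Pi.single (row x) 1 : ι → F)) := by
    apply le_antisymm <;> rw [Submodule.span_le]
    · rintro _ ⟨j, rfl⟩
      by_cases hj : j ∈ Set.range col
      · obtain ⟨x, rfl⟩ := hj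
        exact Submodule.subset_span ⟨x, (hcol x).symm⟩
      · rw [hzero j hj]
        exact zero_mem _
    · rintro _ ⟨x, rfl⟩
      exact Submodule.subset_span ⟨col x, hcol x⟩
  rw [rank_eq_finrank_span_cols, hspan, finrank_span_eq_card]
  convert (Pi.basisFun F ι).linearIndependent.comp row hrow
  simp

end Matrix

open Finset in
theorem Monotone.eq_of_card_filter_le_eq {α : Type*} [LinearOrder α] {r : ℕ} {a b : Fin r → α}
    (ha : Monotone a) (hb : Monotone b)
    (h : ∀ t, #{i | a i ≤ t} = #{i | b i ≤ t}) : a = b := by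
  suffices key : ∀ {a b : Fin r → α}, Monotone a → Monotone b →
      (∀ t, #{i | a i ≤ t} = #{i | b i ≤ t}) → ∀ i, a i ≤ b i from
    funext fun i => le_antisymm (key ha hb h i) (key hb ha (fun t => (h t).symm) i)
  intro a b ha hb h i
  by_contra! hlt
  have hsub_a : univ.filter (fun j => a j ≤ b i) ⊆ Iio i := fun j hj => by
    simp only [mem_filter, mem_univ, true_and] at hj
    exact mem_Iio.2 (lt_of_not_ge fun hij => (ha hij).not_gt (hj.trans_lt hlt))
  have hsub_b : Iic i ⊆ univ.filter fun j => b j ≤ b i := fun j hj =>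
    mem_filter.2 ⟨mem_univ _, hb (mem_Iic.1 hj)⟩
  have hcard_a := card_le_card hsub_a
  have hcard_b := card_le_card hsub_b
  rw [Fin.card_Iio] at hcard_a
  rw [Fin.card_Iic] at hcard_b
  have := h (b i)
  omega

open Finset in
theorem Finset.sum_succ_tsub {ι : Type*} (s : Finset ι) (a : ι → ℕ) (t : ℕ) :
    ∑ i ∈ s, (t + 1 - a i) = ∑ i ∈ s, (t - a i) + #{i ∈ s | a i ≤ t} := by
  rw [Finset.card_filter, ← Finset.sum_add_distrib]
  refine Finset.sum_congr rfl fun i _ => ?_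
  split_ifs <;> omega

open Finset in
theorem Fin.card_filter_add_val_lt (n c : ℕ) : #{l : Fin n | c + l < n} = n - c := by
  have h : univ.filter (fun l : Fin n => c + l < n) = univ.filter fun l : Fin n => l < n - c := by
    ext l
    simp only [mem_filter, mem_univ, true_and]
    omega
  rw [h, Fin.card_filter_val_lt, min_eq_right (Nat.sub_le n c)]

namespace RM

open Polynomial
open scoped nonZeroDivisors

variable {F : Type*} [Field F]

def nonvanishingAt (a : F) : Submonoid F[X] where
  carrier := {p | p.eval a ≠ 0}
  mul_mem' hp hq := by simp_all
  one_mem' := by simp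

theorem nonvanishingAt_le_nonZeroDivisors (a : F) : nonvanishingAt a ≤ F[X]⁰ := fun p hp =>
  mem_nonZeroDivisors_of_ne_zero <| by rintro rfl; exact hp eval_zero

noncomputable def definedAtSubalgebra (a : F) : Subalgebra F[X] (RatFunc F) :=
  Localization.subalgebra.ofField _ _ (nonvanishingAt_le_nonZeroDivisors a)

instance (a : F) : IsLocalization (nonvanishingAt a) (definedAtSubalgebra a) :=
  Localization.subalgebra.isLocalization_ofField _ _ (nonvanishingAt_le_nonZeroDivisors a)

theorem algebraMap_div_mem_definedAtSubalgebra {a : F} (q : F[X]) {s : F[X]}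
    (hs : s.eval a ≠ 0) :
    algebraMap F[X] (RatFunc F) q / algebraMap F[X] (RatFunc F) s ∈ definedAtSubalgebra a :=
  ⟨q, s, hs, div_eq_mul_inv _ _⟩

theorem mem_definedAtSubalgebra {a : F} {x : RatFunc F} :
    x ∈ definedAtSubalgebra a ↔ RDefinedAt x a := by
  refine ⟨?_, fun hx => RatFunc.num_div_denom x ▸ algebraMap_div_mem_definedAtSubalgebra _ hx⟩
  rintro ⟨q, s, hs, rfl⟩
  have hs0 : s ≠ 0 := by rintro rfl; exact hs eval_zero
  have hdvd : (algebraMap F[X] (RatFunc F) q * (algebraMap F[X] (RatFunc F) s)⁻¹).denom ∣ s :=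
    (RatFunc.denom_dvd hs0).2 ⟨q, (div_eq_mul_inv _ _).symm⟩
  exact fun h => hs (eval_eq_zero_of_dvd_of_eval_eq_zero hdvd h)

theorem isUnit_map_of_eval_ne_zero {B : Type*} [CommRing B] {a : F} (f : F[X] →+* B)
    (hf : IsNilpotent (f (X - C a))) {p : F[X]} (hp : p.eval a ≠ 0) : IsUnit (f p) := by
  obtain ⟨q, hq⟩ := X_sub_C_dvd_sub_C_eval (p := p) (a := a)
  have hfp : f p = f (C (p.eval a)) + f (X - C a) * f q := by
    rw [← map_mul, ← hq, ← map_add, add_sub_cancel]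
  rw [hfp]
  exact (Commute.all _ _).isNilpotent_mul_right hf |>.isUnit_add_left_of_commute
    ((isUnit_C.2 hp.isUnit).map f) (Commute.all _ _)

noncomputable def liftAt {B : Type*} [CommRing B] (a : F) (f : F[X] →+* B)
    (hf : IsNilpotent (f (X - C a))) : definedAtSubalgebra a →+* B :=
  IsLocalization.lift (M := nonvanishingAt a) fun s => isUnit_map_of_eval_ne_zero f hf s.2

theorem liftAt_algebraMap {B : Type*} [CommRing B] {a : F} (f : F[X] →+* B)
    (hf : IsNilpotent (f (X - C a))) (p : F[X]) :
    liftAt a f hf (algebraMap F[X] (definedAtSubalgebra a) p) = f p :=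
  IsLocalization.lift_eq _ p

noncomputable def evalAt (a : F) : definedAtSubalgebra a →+* F :=
  liftAt a (evalRingHom a) (by simp)

theorem evalAt_algebraMap {a : F} (p : F[X]) :
    evalAt a (algebraMap F[X] (definedAtSubalgebra a) p) = p.eval a :=
  liftAt_algebraMap _ _ p

theorem rEval_coe {a : F} (x : definedAtSubalgebra a) :
    rEval (x : RatFunc F) a = evalAt a x := by
  have hnum : algebraMap F[X] (definedAtSubalgebra a) x.1.num =
      x * algebraMap F[X] (definedAtSubalgebra a) x.1.denom := Subtype.ext <|
    (div_eq_iff (RatFunc.algebraMap_ne_zero x.1.denom_ne_zero)).1 (RatFunc.num_div_denom x.1)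
  have h := congrArg (evalAt a) hnum
  rw [map_mul, evalAt_algebraMap, evalAt_algebraMap] at h
  rw [rEval, h, mul_div_cancel_right₀ _ (mem_definedAtSubalgebra.1 x.2)]

theorem isUnit_of_evalAt_ne_zero {a : F} {x : definedAtSubalgebra a} (hx : evalAt a x ≠ 0) :
    IsUnit x := by
  obtain ⟨⟨p, s⟩, rfl⟩ := IsLocalization.mk'_surjective (nonvanishingAt a) x
  have hp : p ∈ nonvanishingAt a := by
    intro hp0
    apply hx
    have h := congrArg (evalAt a) (IsLocalization.mk'_spec (definedAtSubalgebra a) p s)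
    rw [map_mul, evalAt_algebraMap, evalAt_algebraMap, hp0] at h
    exact (mul_eq_zero.1 h).resolve_right s.2
  exact IsUnit.of_mul_eq_one _ (IsLocalization.mk'_mul_mk'_eq_one' p s hp)

section Matrices

variable {ι κ : Type*} {a : F}

theorem exists_map_coe_eq_of_definedAt {M : Matrix ι κ (RatFunc F)} (hM : DefinedAt M a) :
    ∃ N : Matrix ι κ (definedAtSubalgebra a), N.map (↑) = M :=
  ⟨Matrix.of fun i j => ⟨M i j, mem_definedAtSubalgebra.2 (hM i j)⟩, rfl⟩

theorem definedAt_map_coe (N : Matrix ι κ (definedAtSubalgebra a)) : DefinedAt (N.map (↑)) a :=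
  fun i j => mem_definedAtSubalgebra.1 (N i j).2

theorem map_coe_mul [Fintype κ] {ρ : Type*} (M : Matrix ι κ (definedAtSubalgebra a))
    (N : Matrix κ ρ (definedAtSubalgebra a)) :
    (M * N).map (↑) =
      M.map ((↑) : definedAtSubalgebra a → RatFunc F) * N.map ((↑) : _ → RatFunc F) :=
  Matrix.map_mul (f := (definedAtSubalgebra a).val.toRingHom)

variable [DecidableEq ι]

theorem map_coe_one :
    (1 : Matrix ι ι (definedAtSubalgebra a)).map (↑) = (1 : Matrix ι ι (RatFunc F)) :=
  Matrix.map_one _ rfl rfl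

variable [Fintype ι]

theorem regularAt_iff {R : Matrix ι ι (RatFunc F)} :
    RegularAt R a ↔ ∃ U : Matrix ι ι (definedAtSubalgebra a), IsUnit U ∧ U.map (↑) = R := by
  have hdet (U : Matrix ι ι (definedAtSubalgebra a)) :
      (matEval (U.map (↑)) a).det = evalAt a U.det := by
    rw [RingHom.map_det]
    congr 1
    ext i j
    exact rEval_coe (U i j)
  constructor
  · rintro ⟨hR, hRa⟩
    obtain ⟨U, rfl⟩ := exists_map_coe_eq_of_definedAt hR
    rw [hdet] at hRa
    exact ⟨U, (U.isUnit_iff_isUnit_det).2 (isUnit_of_evalAt_ne_zero hRa.ne_zero), rfl⟩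
  · rintro ⟨U, hU, rfl⟩
    refine ⟨definedAt_map_coe U, ?_⟩
    rw [hdet]
    exact ((U.isUnit_iff_isUnit_det).1 hU).map _

theorem RegularAt.isUnit {R : Matrix ι ι (RatFunc F)} (hR : RegularAt R a) : IsUnit R := by
  obtain ⟨U, hU, rfl⟩ := regularAt_iff.1 hR
  exact hU.map (definedAtSubalgebra a).val.toRingHom.mapMatrix

theorem RegularAt.mul {R S : Matrix ι ι (RatFunc F)} (hR : RegularAt R a)
    (hS : RegularAt S a) : RegularAt (R * S) a := by
  obtain ⟨U, hU, rfl⟩ := regularAt_iff.1 hR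
  obtain ⟨V, hV, rfl⟩ := regularAt_iff.1 hS
  exact regularAt_iff.2 ⟨U * V, hU.mul hV, map_coe_mul U V⟩

theorem RegularAt.inv {R : Matrix ι ι (RatFunc F)} (hR : RegularAt R a) : RegularAt R⁻¹ a := by
  obtain ⟨U, hU, rfl⟩ := regularAt_iff.1 hR
  obtain ⟨V, hUV⟩ := hU.exists_right_inv
  refine regularAt_iff.2 ⟨V, (V.isUnit_iff_isUnit_det).2 (V.isUnit_det_of_left_inverse hUV), ?_⟩
  rw [Matrix.inv_eq_right_inv (B := V.map (↑)) (by rw [← map_coe_mul, hUV, map_coe_one])]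

variable [Fintype κ] [DecidableEq κ]

theorem EquivAt.symm {G H : Matrix ι κ (RatFunc F)} (h : EquivAt G H a) : EquivAt H G a := by
  obtain ⟨R₁, R₂, h₁, h₂, rfl⟩ := h
  refine ⟨R₁⁻¹, R₂⁻¹, h₁.inv, h₂.inv, ?_⟩
  rw [← Matrix.mul_assoc R₁⁻¹, Matrix.mul_nonsing_inv_cancel_right _ _
    ((R₂.isUnit_iff_isUnit_det).1 h₂.isUnit),
    Matrix.nonsing_inv_mul_cancel_left _ _ ((R₁.isUnit_iff_isUnit_det).1 h₁.isUnit)]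

theorem EquivAt.trans {G H J : Matrix ι κ (RatFunc F)} (hGH : EquivAt G H a)
    (hHJ : EquivAt H J a) : EquivAt G J a := by
  obtain ⟨R₁, R₂, h₁, h₂, rfl⟩ := hGH
  obtain ⟨S₁, S₂, k₁, k₂, rfl⟩ := hHJ
  exact ⟨S₁ * R₁, R₂ * S₂, k₁.mul h₁, h₂.mul k₂, by simp only [Matrix.mul_assoc]⟩

theorem EquivAt.smul {G H : Matrix ι κ (RatFunc F)} (h : EquivAt G H a) (c : RatFunc F) :
    EquivAt (c • G) (c • H) a := by
  obtain ⟨R₁, R₂, h₁, h₂, rfl⟩ := h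
  exact ⟨R₁, R₂, h₁, h₂, by simp only [Matrix.mul_smul, Matrix.smul_mul]⟩

end Matrices

theorem aeval_X_inv_eq {p : F[X]} {N : ℕ} (hN : p.natDegree ≤ N) :
    aeval (RatFunc.X : RatFunc F)⁻¹ p =
      algebraMap F[X] (RatFunc F) (p.reflect N) * ((RatFunc.X : RatFunc F) ^ N)⁻¹ := by
  let _ : Invertible (RatFunc.X : RatFunc F)⁻¹ :=
    invertibleOfNonzero (inv_ne_zero RatFunc.X_ne_zero)
  have h := eval₂_reflect_mul_pow (algebraMap F (RatFunc F)) (RatFunc.X : RatFunc F)⁻¹ N p hN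
  rw [invOf_eq_inv, inv_inv, ← aeval_def, RatFunc.aeval_X_left_eq_algebraMap, inv_pow] at h
  rw [aeval_def, ← h]

theorem aeval_X_inv_ne_zero {p : F[X]} (hp : p ≠ 0) :
    aeval (RatFunc.X : RatFunc F)⁻¹ p ≠ 0 := by
  rw [aeval_X_inv_eq le_rfl]
  exact mul_ne_zero (RatFunc.algebraMap_ne_zero (reflect_eq_zero_iff.not.2 hp))
    (inv_ne_zero (pow_ne_zero _ RatFunc.X_ne_zero))

theorem nonZeroDivisors_le_comap_aeval_X_inv :
    F[X]⁰ ≤ (RatFunc F)⁰.comap (aeval (RatFunc.X : RatFunc F)⁻¹).toRingHom := fun _ hp =>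
  mem_nonZeroDivisors_of_ne_zero (aeval_X_inv_ne_zero (nonZeroDivisors.ne_zero hp))

noncomputable def invSubst : RatFunc F →+* RatFunc F :=
  RatFunc.liftRingHom _ nonZeroDivisors_le_comap_aeval_X_inv

theorem rAtInv_eq_invSubst (x : RatFunc F) : rAtInv x = invSubst x := by
  rw [invSubst, RatFunc.liftRingHom_apply]
  rfl

theorem invSubst_X : invSubst (RatFunc.X : RatFunc F) = RatFunc.X⁻¹ := by
  rw [← rAtInv_eq_invSubst, rAtInv, RatFunc.num_X, RatFunc.denom_X]
  simp

theorem invSubst_mem_definedAtSubalgebra_zero {x : RatFunc F} (hx : ProperR x) :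
    invSubst x ∈ definedAtSubalgebra (0 : F) := by
  have hN : x.num.natDegree ≤ x.denom.natDegree := natDegree_le_natDegree hx
  have hXN : ((RatFunc.X : RatFunc F) ^ x.denom.natDegree)⁻¹ ≠ 0 :=
    inv_ne_zero (pow_ne_zero _ RatFunc.X_ne_zero)
  rw [← rAtInv_eq_invSubst, rAtInv, ← aeval_def, ← aeval_def, aeval_X_inv_eq hN,
    aeval_X_inv_eq le_rfl, mul_div_mul_right _ _ hXN]
  refine algebraMap_div_mem_definedAtSubalgebra _ ?_
  rw [← coeff_zero_eq_eval_zero, ← reverse, coeff_zero_reverse]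
  exact leadingCoeff_ne_zero.2 x.denom_ne_zero

section Reversal

variable {ι κ : Type*}

theorem matRev_eq_smul_map (g : ℤ) (M : Matrix ι κ (RatFunc F)) :
    matRev g M = (RatFunc.X : RatFunc F) ^ g • M.map invSubst := by
  ext i j
  exact congrArg _ (rAtInv_eq_invSubst _)

theorem matRev_mul [Fintype ι] [Fintype κ] {ι' κ' : Type*} (g : ℤ)
    (B₁ : Matrix ι' ι (RatFunc F)) (G : Matrix ι κ (RatFunc F)) (B₂ : Matrix κ κ' (RatFunc F)) :
    matRev g (B₁ * G * B₂) = B₁.map invSubst * matRev g G * B₂.map invSubst := by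
  simp only [matRev_eq_smul_map, Matrix.map_mul, Matrix.mul_smul, Matrix.smul_mul]

theorem Biproper.regularAt_map_invSubst [Fintype ι] [DecidableEq ι]
    {B : Matrix ι ι (RatFunc F)} (hB : Biproper B) : RegularAt (B.map invSubst) 0 := by
  obtain ⟨hBp, S, hSp, hBS, -⟩ := hB
  obtain ⟨U, hU⟩ := exists_map_coe_eq_of_definedAt (a := 0) (M := B.map invSubst) fun i j =>
    mem_definedAtSubalgebra.1 (invSubst_mem_definedAtSubalgebra_zero (hBp i j))
  obtain ⟨V, hV⟩ := exists_map_coe_eq_of_definedAt (a := 0) (M := S.map invSubst) fun i j =>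
    mem_definedAtSubalgebra.1 (invSubst_mem_definedAtSubalgebra_zero (hSp i j))
  have hUV : U * V = 1 := Matrix.map_injective Subtype.val_injective <| by
    simp only [map_coe_mul, map_coe_one, hU, hV, ← Matrix.map_mul, hBS,
      Matrix.map_one _ (map_zero _) (map_one _)]
  exact regularAt_iff.2 ⟨U, (U.isUnit_iff_isUnit_det).2 (U.isUnit_det_of_right_inverse hUV), hU⟩

theorem EquivAtInf.equivAt_matRev [Fintype ι] [Fintype κ] [DecidableEq ι] [DecidableEq κ]
    {G H : Matrix ι κ (RatFunc F)} (h : EquivAtInf G H) (g : ℤ) :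
    EquivAt (matRev g G) (matRev g H) 0 := by
  obtain ⟨B₁, B₂, h₁, h₂, rfl⟩ := h
  exact ⟨_, _, h₁.regularAt_map_invSubst, h₂.regularAt_map_invSubst, (matRev_mul g B₁ G B₂).symm⟩

end Reversal

theorem localPow_zero_left (k : ℤ) : localPow (0 : F) k = RatFunc.X ^ k := by
  rw [localPow, map_zero, sub_zero, RatFunc.algebraMap_X]

theorem matRev_infDiag (p m : ℕ) {r : ℕ} (g : ℤ) (μ : Fin r → ℤ) :
    matRev g (infDiag p m μ : Matrix _ _ (RatFunc F)) = localDiag p m 0 fun i => μ i + g := by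
  ext i j
  rw [matRev_eq_smul_map, Matrix.smul_apply, Matrix.map_apply, infDiag, localDiag]
  split_ifs
  · rw [smul_eq_mul, map_zpow₀, invSubst_X, _root_.inv_zpow', neg_neg, localPow_zero_left,
      ← zpow_add₀ RatFunc.X_ne_zero, add_comm]
  · rw [map_zero, smul_zero]

def rectDiag {R : Type*} [Zero R] (p m : ℕ) {r : ℕ} (d : Fin r → R) :
    Matrix (Fin p) (Fin m) R :=
  fun i j => if h : (i : ℕ) = j ∧ (j : ℕ) < r then d ⟨j, h.2⟩ else 0

theorem rectDiag_map {R S : Type*} [Zero R] [Zero S] {p m r : ℕ} (d : Fin r → R) (f : R → S)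
    (hf : f 0 = 0) : (rectDiag p m d).map f = rectDiag p m (f ∘ d) := by
  ext i j
  simp only [Matrix.map_apply, rectDiag]
  split_ifs <;> simp [hf]

theorem localDiag_eq_rectDiag (p m : ℕ) (a : F) {r : ℕ} (ν : Fin r → ℤ) :
    localDiag p m a ν = rectDiag p m fun i => localPow a (ν i) := rfl

theorem smul_localDiag (p m : ℕ) (a : F) {r : ℕ} (ν : Fin r → ℤ) (k : ℤ) :
    localPow a k • localDiag p m a ν = localDiag p m a fun i => ν i + k := by
  have hX : algebraMap F[X] (RatFunc F) (X - C a) ≠ 0 :=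
    RatFunc.algebraMap_ne_zero (X_sub_C_ne_zero a)
  ext i j
  simp only [Matrix.smul_apply, localDiag, localPow, smul_eq_mul]
  split_ifs
  · rw [← zpow_add₀ hX, add_comm]
  · rw [mul_zero]

section Flatten

variable {B : Type*} [CommRing B] [Algebra F B] {ν : Type*} [Fintype ν] [DecidableEq ν]
  {ι κ : Type*}

noncomputable def flatten (b : Module.Basis ν F B) (M : Matrix ι κ B) :
    Matrix (ι × ν) (κ × ν) F :=
  Matrix.comp ι κ ν ν F (M.map (Algebra.leftMulMatrix b))

theorem flatten_apply (b : Module.Basis ν F B) (M : Matrix ι κ B) (i : ι) (k : ν) (j : κ)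
    (l : ν) : flatten b M (i, k) (j, l) = Algebra.leftMulMatrix b (M i j) k l := rfl

theorem flatten_mul [Fintype κ] {ρ : Type*} (b : Module.Basis ν F B) (M : Matrix ι κ B)
    (N : Matrix κ ρ B) : flatten b (M * N) = flatten b M * flatten b N := by
  rw [flatten, ← AlgHom.coe_toRingHom, Matrix.map_mul]
  exact Matrix.comp_mul _ _

theorem isUnit_flatten [Fintype ι] [DecidableEq ι] (b : Module.Basis ν F B) {U : Matrix ι ι B}
    (hU : IsUnit U) : IsUnit (flatten b U) :=
  (Matrix.isUnit_comp_iff _ _ _).2 (hU.map (Algebra.leftMulMatrix b).toRingHom.mapMatrix)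

theorem rank_flatten_mul_mul [Fintype ι] [Fintype κ] [DecidableEq ι] [DecidableEq κ]
    (b : Module.Basis ν F B) {U : Matrix ι ι B} {V : Matrix κ κ B} (hU : IsUnit U)
    (hV : IsUnit V) (M : Matrix ι κ B) : (flatten b (U * M * V)).rank = (flatten b M).rank := by
  rw [flatten_mul, flatten_mul,
    Matrix.rank_mul_eq_left_of_isUnit_det _ _ ((Matrix.isUnit_iff_isUnit_det _).1
      (isUnit_flatten b hV)),
    Matrix.rank_mul_eq_right_of_isUnit_det _ _ ((Matrix.isUnit_iff_isUnit_det _).1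
      (isUnit_flatten b hU))]

theorem leftMulMatrix_gen_pow (pb : PowerBasis F B) (hgen : pb.gen ^ pb.dim = 0) (c : ℕ)
    (k l : Fin pb.dim) :
    Algebra.leftMulMatrix pb.basis (pb.gen ^ c) k l = if (k : ℕ) = c + l then 1 else 0 := by
  rw [Algebra.leftMulMatrix_eq_repr_mul, pb.coe_basis, ← pow_add]
  by_cases h : c + l < pb.dim
  · have hbasis : pb.gen ^ (c + l : ℕ) = pb.basis ⟨c + l, h⟩ := by rw [pb.coe_basis]
    simp only [hbasis, Module.Basis.repr_self, Finsupp.single_apply, Fin.ext_iff, eq_comm]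
  · rw [pow_eq_zero_of_le (not_lt.1 h) hgen, map_zero, Finsupp.zero_apply, if_neg (by omega)]

theorem rank_flatten_rectDiag_gen_pow (pb : PowerBasis F B) (hgen : pb.gen ^ pb.dim = 0)
    {p m r : ℕ} (hrp : r ≤ p) (hrm : r ≤ m) (b : Fin r → ℕ) :
    (flatten pb.basis (rectDiag p m fun i => pb.gen ^ b i)).rank = ∑ i, (pb.dim - b i) := by
  let σ := {x : Fin r × Fin pb.dim // b x.1 + x.2 < pb.dim}
  have hσ : Fintype.card σ = ∑ i, (pb.dim - b i) := by
    rw [Fintype.card_subtype, Finset.card_filter, Fintype.sum_prod_type]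
    refine Finset.sum_congr rfl fun i _ => ?_
    rw [← Finset.card_filter]
    convert Fin.card_filter_add_val_lt pb.dim (b i)
  rw [← hσ]
  refine Matrix.rank_eq_card_of_col_eq_single _
    (fun x : σ => (Fin.castLE hrp x.1.1, ⟨b x.1.1 + x.1.2, x.2⟩))
    (fun x : σ => (Fin.castLE hrm x.1.1, x.1.2)) ?_ ?_ ?_
  · rintro ⟨⟨i, l⟩, hx⟩ ⟨⟨i', l'⟩, hx'⟩ h
    simp only [Prod.mk.injEq, Fin.ext_iff, Fin.val_castLE] at h
    obtain ⟨hi, hl⟩ := h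
    obtain rfl : i = i' := Fin.ext hi
    obtain rfl : l = l' := Fin.ext (by omega)
    rfl
  · rintro ⟨⟨i, l⟩, hx⟩
    ext ⟨i', k⟩
    simp only [Matrix.col_apply, flatten_apply, rectDiag, Fin.val_castLE, Pi.single_apply,
      Prod.ext_iff, Fin.ext_iff]
    by_cases h : (i' : ℕ) = i
    · rw [dif_pos ⟨h, i.2⟩, Fin.eta, leftMulMatrix_gen_pow pb hgen]
      simp only [h, true_and]
    · rw [dif_neg fun h' => h h'.1, map_zero, Matrix.zero_apply, if_neg fun h' => h h'.1]
  · rintro ⟨j, l⟩ hjl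
    ext ⟨i', k⟩
    simp only [Matrix.col_apply, flatten_apply, rectDiag, Pi.zero_apply]
    split_ifs with h
    · rw [leftMulMatrix_gen_pow pb hgen, if_neg]
      intro hk
      exact hjl ⟨⟨⟨⟨j, h.2⟩, l⟩, by dsimp only; omega⟩, rfl⟩
    · rw [map_zero, Matrix.zero_apply]

end Flatten

/-- Reduction modulo `(X - a)^t`, with `F[X]/(X^t)` as target and `X - a` sent to its root. -/
noncomputable def truncAt (a : F) (t : ℕ) :
    definedAtSubalgebra a →+* AdjoinRoot ((X : F[X]) ^ t) :=
  liftAt a (aeval (AdjoinRoot.root _ + algebraMap F _ a)).toRingHom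
    ⟨t, by simp [← AdjoinRoot.mk_X, ← map_pow]⟩

theorem truncAt_algebraMap_X_sub_C_pow (a : F) (t n : ℕ) :
    truncAt a t (algebraMap F[X] _ ((X - C a) ^ n)) = AdjoinRoot.root _ ^ n := by
  simp [truncAt, liftAt_algebraMap]

variable (F) in
noncomputable def truncPowerBasis (t : ℕ) : PowerBasis F (AdjoinRoot ((X : F[X]) ^ t)) :=
  AdjoinRoot.powerBasis (pow_ne_zero t X_ne_zero)

theorem truncPowerBasis_dim (t : ℕ) : (truncPowerBasis F t).dim = t := by
  rw [truncPowerBasis, AdjoinRoot.powerBasis_dim, natDegree_X_pow]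

theorem truncPowerBasis_gen (t : ℕ) : (truncPowerBasis F t).gen = AdjoinRoot.root _ :=
  AdjoinRoot.powerBasis_gen _

noncomputable def powDiag (p m : ℕ) (a : F) {r : ℕ} (b : Fin r → ℕ) :
    Matrix (Fin p) (Fin m) (definedAtSubalgebra a) :=
  rectDiag p m fun i => algebraMap F[X] _ ((X - C a) ^ b i)

theorem powDiag_map_coe (p m : ℕ) (a : F) {r : ℕ} (b : Fin r → ℕ) :
    (powDiag p m a b).map (↑) = localDiag p m a fun i => (b i : ℤ) := by
  rw [powDiag, rectDiag_map _ _ rfl, localDiag_eq_rectDiag]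
  congr 1
  funext i
  simp [localPow]

theorem rank_flatten_truncAt_powDiag {p m r : ℕ} (hrp : r ≤ p) (hrm : r ≤ m) (a : F) (t : ℕ)
    (b : Fin r → ℕ) :
    (flatten (truncPowerBasis F t).basis ((powDiag p m a b).map (truncAt a t))).rank =
      ∑ i, (t - b i) := by
  have hgen : (truncPowerBasis F t).gen ^ (truncPowerBasis F t).dim = 0 := by
    rw [truncPowerBasis_gen, truncPowerBasis_dim, ← AdjoinRoot.mk_X, ← map_pow,
      AdjoinRoot.mk_self]
  have hmap : (powDiag p m a b).map (truncAt a t) =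
      rectDiag p m fun i => (truncPowerBasis F t).gen ^ b i := by
    rw [powDiag, rectDiag_map _ _ (map_zero _), truncPowerBasis_gen]
    congr 1
    funext i
    exact truncAt_algebraMap_X_sub_C_pow a t (b i)
  rw [hmap, rank_flatten_rectDiag_gen_pow _ hgen hrp hrm, truncPowerBasis_dim]

theorem eq_of_equivAt_localDiag_natCast {p m r : ℕ} (hrp : r ≤ p) (hrm : r ≤ m) {a : F}
    {b c : Fin r → ℕ} (hb : Monotone b) (hc : Monotone c)
    (h : EquivAt (localDiag p m a fun i => (b i : ℤ)) (localDiag p m a fun i => (c i : ℤ)) a) :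
    b = c := by
  obtain ⟨R₁, R₂, h₁, h₂, hR⟩ := h
  obtain ⟨U₁, hU₁, rfl⟩ := regularAt_iff.1 h₁
  obtain ⟨U₂, hU₂, rfl⟩ := regularAt_iff.1 h₂
  have hU : U₁ * powDiag p m a b * U₂ = powDiag p m a c :=
    Matrix.map_injective Subtype.val_injective <| by simp only [map_coe_mul, powDiag_map_coe, hR]
  have hsum (t : ℕ) : ∑ i, (t - b i) = ∑ i, (t - c i) := by
    have h₁ : IsUnit (U₁.map (truncAt a t)) := hU₁.map (truncAt a t).mapMatrix
    have h₂ : IsUnit (U₂.map (truncAt a t)) := hU₂.map (truncAt a t).mapMatrix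
    rw [← rank_flatten_truncAt_powDiag hrp hrm a, ← rank_flatten_truncAt_powDiag hrp hrm a, ← hU,
      Matrix.map_mul, Matrix.map_mul, rank_flatten_mul_mul _ h₁ h₂]
  refine hb.eq_of_card_filter_le_eq hc fun t => ?_
  have hb' := Finset.univ.sum_succ_tsub b t
  have hc' := Finset.univ.sum_succ_tsub c t
  rw [hsum, hsum] at hb'
  omega

theorem eq_of_equivAt_localDiag {p m r : ℕ} (hrp : r ≤ p) (hrm : r ≤ m) {a : F}
    {e f : Fin r → ℤ} (he : Monotone e) (hf : Monotone f)
    (h : EquivAt (localDiag p m a e) (localDiag p m a f) a) : e = f := by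
  set N := ∑ i, ((e i).natAbs + (f i).natAbs)
  have hN (i : Fin r) : (e i).natAbs + (f i).natAbs ≤ N :=
    Finset.single_le_sum (f := fun i => (e i).natAbs + (f i).natAbs) (fun _ _ => Nat.zero_le _)
      (Finset.mem_univ i)
  have hshift (d : Fin r → ℤ) (hd : ∀ i, (d i).natAbs ≤ N) :
      localPow a N • localDiag p m a d = localDiag p m a fun i => ((d i + N).toNat : ℕ) := by
    rw [smul_localDiag]
    congr 1
    funext i
    have := hd i
    omega
  have hnat := eq_of_equivAt_localDiag_natCast hrp hrm
    (fun i j hij => Int.toNat_le_toNat (he.add_const (N : ℤ) hij))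
    (fun i j hij => Int.toNat_le_toNat (hf.add_const (N : ℤ) hij))
    (by rw [← hshift e fun i => by have := hN i; omega, ← hshift f fun i => by have := hN i; omega]
        exact h.smul _)
  funext i
  have hi := congrFun hnat i
  dsimp only at hi
  have := hN i
  omega

end RM

theorem invOrders_rev_eq_invOrdersAtInf_add_general {F : Type*} [Field F]
    {p m : ℕ} (G : Matrix (Fin p) (Fin m) (RatFunc F)) (g : ℤ) {r : ℕ}
    (e q : Fin r → ℤ)
    (he : RM.IsInvOrdersAt (RM.matRev g G) (0 : F) e)
    (hq : RM.IsInvOrdersAtInf G q) :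
    ∀ i, e i = q i + g := by
  obtain ⟨hr, hme, hGe⟩ := he
  obtain ⟨-, hmq, hGq⟩ := hq
  have hrp : r ≤ p := hr ▸ by simpa using (RM.matRev g G).rank_le_card_height
  have hrm : r ≤ m := hr ▸ by simpa using (RM.matRev g G).rank_le_card_width
  have hequiv : RM.EquivAt (RM.localDiag p m (0 : F) e) (RM.localDiag p m 0 (q · + g)) 0 := by
    rw [← RM.matRev_infDiag]
    exact hGe.symm.trans (hGq.equivAt_matRev g)
  exact congrFun (RM.eq_of_equivAt_localDiag hrp hrm hme (hmq.add_const g) hequiv)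

/-- If `e₁ ≤ … ≤ e_r` are the invariant orders of `rev_g G` at `0` and
`q₁ ≤ … ≤ q_r` are the invariant orders of `G` at `∞`, then `e_i = q_i + g` for all `i`. -/
theorem invOrders_rev_eq_invOrdersAtInf_add {F : Type*} [Field F] [IsAlgClosed F]
    {p m : ℕ} (G : Matrix (Fin p) (Fin m) (RatFunc F)) (g : ℤ) {r : ℕ}
    (e q : Fin r → ℤ)
    (he : RM.IsInvOrdersAt (RM.matRev g G) (0 : F) e)
    (hq : RM.IsInvOrdersAtInf G q) :
    ∀ i, e i = q i + g :=
  invOrders_rev_eq_invOrdersAtInf_add_general G g e q he hq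
end

section
/- Let R(λ) ∈ F(λ)^{p×m} be a rational matrix of full row normal rank and let T(λ) ∈ F[λ]^{p×m} be a minimal basis of the row space of R(λ), i.e., a minimal basis whose rows span over F(λ) the same rational row space as the rows of R(λ). Then: (a) there exists a unique rational matrix S(λ) ∈ F(λ)^{p×p} with det S(λ) ≢ 0 such that R(λ) = S(λ)T(λ); (b) for any Σ ⊆ F, R(λ) has full row rank in Σ if and only if S(λ) is regular in Σ; (c) R(λ) is a polynomial matrix if and only if S(λ) is a polynomial matrix; (d) if R(λ) is a matrix pencil (polynomial of degree at most 1), then both S(λ) and T(λ) are matrix pencils. -/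
set_option synthInstance.maxHeartbeats 1000000
set_option maxHeartbeats 1000000

open Matrix

/-!
At every point `a ∈ F` the constant matrix `T(a)` has full row rank, so `T` has a right inverse
`W` over `F(λ)` that is defined at `a` (it is assembled from a constant right inverse of `T(a)`).
Hence `S = R W` is defined wherever `R` is, which gives the uniqueness of `S`, part (b), and
part (c), since over an algebraically closed field a rational function defined everywhere is a
polynomial. For (d), row reducedness of `T` yields the predictable degree property
`deg S i j + rowdeg_j T ≤ rowdeg_i (S T)`, so `deg (S T) ≤ 1` bounds the degrees of `S` and `T`.
-/

namespace RM

open Polynomial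

variable {F : Type*} [Field F] {a : F}

section Scalar

variable {x y : RatFunc F}

lemma RDefinedAt.of_denom_dvd {g : F[X]} (hdvd : x.denom ∣ g) (hg : g.eval a ≠ 0) :
    RDefinedAt x a :=
  fun h => hg (eval_eq_zero_of_dvd_of_eval_eq_zero hdvd h)

lemma rDefinedAt_div (f : F[X]) {g : F[X]} (hg : g.eval a ≠ 0) :
    RDefinedAt (algebraMap F[X] (RatFunc F) f / algebraMap F[X] (RatFunc F) g) a :=
  .of_denom_dvd (RatFunc.denom_div_dvd f g) hg

lemma rDefinedAt_algebraMap (f : F[X]) : RDefinedAt (algebraMap F[X] (RatFunc F) f) a := by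
  simp [RDefinedAt, RatFunc.denom_algebraMap]

lemma rEval_algebraMap (f : F[X]) : rEval (algebraMap F[X] (RatFunc F) f) a = f.eval a := by
  simp [rEval, RatFunc.num_algebraMap, RatFunc.denom_algebraMap]

lemma RDefinedAt.add (hx : RDefinedAt x a) (hy : RDefinedAt y a) : RDefinedAt (x + y) a :=
  .of_denom_dvd (RatFunc.denom_add_dvd x y) (by rw [eval_mul]; exact mul_ne_zero hx hy)

lemma RDefinedAt.mul (hx : RDefinedAt x a) (hy : RDefinedAt y a) : RDefinedAt (x * y) a :=
  .of_denom_dvd (RatFunc.denom_mul_dvd x y) (by rw [eval_mul]; exact mul_ne_zero hx hy)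

lemma rEval_add (hx : RDefinedAt x a) (hy : RDefinedAt y a) :
    rEval (x + y) a = rEval x a + rEval y a :=
  RatFunc.eval_add _ _ hx hy

lemma rEval_mul (hx : RDefinedAt x a) (hy : RDefinedAt y a) :
    rEval (x * y) a = rEval x a * rEval y a :=
  RatFunc.eval_mul _ _ hx hy

lemma rDefinedAt_sum {ι : Type*} (s : Finset ι) {f : ι → RatFunc F}
    (h : ∀ i ∈ s, RDefinedAt (f i) a) : RDefinedAt (∑ i ∈ s, f i) a :=
  Finset.sum_induction f (RDefinedAt · a) (fun _ _ => .add)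
    (by simpa using rDefinedAt_algebraMap (a := a) 0) h

lemma rEval_sum {ι : Type*} [DecidableEq ι] (s : Finset ι) {f : ι → RatFunc F}
    (h : ∀ i ∈ s, RDefinedAt (f i) a) : rEval (∑ i ∈ s, f i) a = ∑ i ∈ s, rEval (f i) a := by
  induction s using Finset.induction_on with
  | empty => simpa using rEval_algebraMap (a := a) 0
  | insert b s hb ih =>
    have hs : ∀ i ∈ s, RDefinedAt (f i) a := fun i hi => h i (Finset.mem_insert_of_mem hi)
    rw [Finset.sum_insert hb, Finset.sum_insert hb,
      rEval_add (h b (Finset.mem_insert_self b s)) (rDefinedAt_sum s hs), ih hs]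

lemma denom_eq_one_of_forall_rDefinedAt [IsAlgClosed F] (h : ∀ b : F, RDefinedAt x b) :
    x.denom = 1 := by
  by_contra hne
  have hdeg : x.denom.degree ≠ 0 :=
    fun h0 => hne ((RatFunc.monic_denom x).degree_le_zero_iff_eq_one.mp h0.le)
  obtain ⟨b, hb⟩ := IsAlgClosed.exists_root x.denom hdeg
  exact h b hb

end Scalar

section Matrix

variable {ι κ σ : Type*}

lemma DefinedAt.mul [Fintype κ] {A : Matrix ι κ (RatFunc F)} {B : Matrix κ σ (RatFunc F)}
    (hA : DefinedAt A a) (hB : DefinedAt B a) : DefinedAt (A * B) a :=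
  fun i j => rDefinedAt_sum _ fun k _ => (hA i k).mul (hB k j)

lemma matEval_mul [Fintype κ] [DecidableEq κ]
    {A : Matrix ι κ (RatFunc F)} {B : Matrix κ σ (RatFunc F)}
    (hA : DefinedAt A a) (hB : DefinedAt B a) : matEval (A * B) a = matEval A a * matEval B a := by
  ext i j
  simp only [matEval, Matrix.mul_apply]
  rw [rEval_sum _ fun k _ => (hA i k).mul (hB k j)]
  exact Finset.sum_congr rfl fun k _ => rEval_mul (hA i k) (hB k j)

lemma definedAt_toRat (P : Matrix ι κ F[X]) : DefinedAt (toRat P) a :=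
  fun i j => rDefinedAt_algebraMap (P i j)

lemma matEval_toRat (P : Matrix ι κ F[X]) : matEval (toRat P) a = polyEval P a :=
  Matrix.ext fun i j => rEval_algebraMap (P i j)

lemma toRat_mul [Fintype κ] (A : Matrix ι κ F[X]) (B : Matrix κ σ F[X]) :
    toRat (A * B) = toRat A * toRat B :=
  Matrix.map_mul

lemma polyEval_mul [Fintype κ] (A : Matrix ι κ F[X]) (B : Matrix κ σ F[X]) :
    polyEval (A * B) a = polyEval A a * polyEval B a :=
  Matrix.map_mul (f := evalRingHom a)

lemma det_toRat [Fintype ι] [DecidableEq ι] (P : Matrix ι ι F[X]) :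
    (toRat P).det = algebraMap F[X] (RatFunc F) P.det :=
  ((algebraMap F[X] (RatFunc F)).map_det P).symm

lemma det_polyEval [Fintype ι] [DecidableEq ι] (P : Matrix ι ι F[X]) :
    (polyEval P a).det = P.det.eval a :=
  ((evalRingHom a).map_det P).symm

lemma definedAt_inv_toRat [Fintype ι] [DecidableEq ι] {P : Matrix ι ι F[X]}
    (hP : P.det.eval a ≠ 0) : DefinedAt (toRat P)⁻¹ a := by
  intro i j
  have hentry : (toRat P)⁻¹ i j = algebraMap F[X] (RatFunc F) (P.adjugate i j) /
      algebraMap F[X] (RatFunc F) P.det := by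
    have hadj : (toRat P).adjugate = toRat P.adjugate :=
      ((algebraMap F[X] (RatFunc F)).map_adjugate P).symm
    rw [Matrix.inv_def, Ring.inverse_eq_inv, det_toRat, hadj, Matrix.smul_apply, smul_eq_mul,
      div_eq_inv_mul]
    rfl
  rw [hentry]
  exact rDefinedAt_div _ hP

end Matrix

section Rank

variable {K : Type*} [Field K] {n p : ℕ} {κ : Type*} [Fintype κ]

lemma linearIndependent_rows_of_rank_eq {M : Matrix (Fin p) κ K} (h : M.rank = p) :
    LinearIndependent K fun i => M i := by
  rw [Matrix.rank_eq_finrank_span_row] at h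
  rw [linearIndependent_iff_card_eq_finrank_span, Fintype.card_fin]
  exact h.symm

lemma isUnit_det_of_rank_eq {M : Matrix (Fin n) (Fin n) K} (h : M.rank = n) : IsUnit M.det :=
  (Matrix.isUnit_iff_isUnit_det M).mp
    (Matrix.linearIndependent_rows_iff_isUnit.mp (linearIndependent_rows_of_rank_eq h))

lemma isUnit_det_of_rank_mul_eq {A : Matrix (Fin n) (Fin n) K} {B : Matrix (Fin n) κ K}
    (h : (A * B).rank = n) : IsUnit A.det :=
  isUnit_det_of_rank_eq (le_antisymm A.rank_le_width (h.ge.trans (A.rank_mul_le_left B)))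

lemma exists_mul_eq_one_of_rank_eq [DecidableEq κ] {M : Matrix (Fin p) κ K} (h : M.rank = p) :
    ∃ V : Matrix κ (Fin p) K, M * V = 1 := by
  rw [← Matrix.mulVec_surjective_iff_exists_right_inverse]
  have hrange : LinearMap.range M.mulVecLin = ⊤ := by
    apply Submodule.eq_top_of_finrank_eq
    rw [Module.finrank_pi, Fintype.card_fin]
    exact h
  exact LinearMap.range_eq_top.mp hrange

end Rank

lemma exists_eq_mul_of_span_le {A : Type*} [CommSemiring A] {ι κ ι' : Type*} [Fintype ι']
    {R : Matrix ι κ A} {T : Matrix ι' κ A}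
    (h : Submodule.span A (Set.range R) ≤ Submodule.span A (Set.range T)) :
    ∃ S : Matrix ι ι' A, R = S * T := by
  have hmem i : R i ∈ Submodule.span A (Set.range T) := h (Submodule.subset_span ⟨i, rfl⟩)
  choose c hc using fun i => (Submodule.mem_span_range_iff_exists_fun A).mp (hmem i)
  refine ⟨Matrix.of c, Matrix.ext fun i k => ?_⟩
  simpa [Matrix.mul_apply, Finset.sum_apply] using (congrFun (hc i) k).symm

section FullRowRank

variable {ι : Type*} {p m : ℕ} {T : Matrix (Fin p) (Fin m) F[X]}

lemma exists_rightInverse_definedAt (hT : (polyEval T a).rank = p) :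
    ∃ W : Matrix (Fin m) (Fin p) (RatFunc F), toRat T * W = 1 ∧ DefinedAt W a := by
  obtain ⟨V, hV⟩ := exists_mul_eq_one_of_rank_eq hT
  set P := T * V.map C
  have hPa : polyEval P a = 1 := by
    rw [polyEval_mul, show polyEval (V.map C) a = V from Matrix.ext fun _ _ => eval_C, hV]
  have hPdet : P.det.eval a ≠ 0 := by
    rw [← det_polyEval, hPa, Matrix.det_one]
    exact one_ne_zero
  have hunit : IsUnit (toRat P).det := by
    rw [det_toRat]
    exact (RatFunc.algebraMap_ne_zero fun h => hPdet (by simp [h])).isUnit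
  refine ⟨toRat (V.map C) * (toRat P)⁻¹, ?_, (definedAt_toRat _).mul (definedAt_inv_toRat hPdet)⟩
  rw [← Matrix.mul_assoc, ← toRat_mul, Matrix.mul_nonsing_inv _ hunit]

lemma definedAt_of_definedAt_mul_toRat (hT : (polyEval T a).rank = p)
    {S : Matrix ι (Fin p) (RatFunc F)} (hS : DefinedAt (S * toRat T) a) : DefinedAt S a := by
  obtain ⟨W, hW, hWa⟩ := exists_rightInverse_definedAt hT
  simpa [Matrix.mul_assoc, hW] using hS.mul hWa

lemma mul_toRat_right_cancel (hT : (polyEval T a).rank = p)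
    {S₁ S₂ : Matrix ι (Fin p) (RatFunc F)} (h : S₁ * toRat T = S₂ * toRat T) : S₁ = S₂ := by
  obtain ⟨W, hW, -⟩ := exists_rightInverse_definedAt hT
  simpa [Matrix.mul_assoc, hW] using congrArg (· * W) h

lemma fullRowRankAt_mul_toRat_iff (hT : (polyEval T a).rank = p)
    {S : Matrix (Fin p) (Fin p) (RatFunc F)} : FullRowRankAt (S * toRat T) a ↔ RegularAt S a := by
  constructor
  · rintro ⟨hdef, hrank⟩
    have hS := definedAt_of_definedAt_mul_toRat hT hdef
    refine ⟨hS, isUnit_det_of_rank_mul_eq (B := polyEval T a) ?_⟩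
    rwa [← matEval_toRat, ← matEval_mul hS (definedAt_toRat T)]
  · rintro ⟨hS, hdet⟩
    refine ⟨hS.mul (definedAt_toRat T), ?_⟩
    rw [matEval_mul hS (definedAt_toRat T), matEval_toRat,
      Matrix.rank_mul_eq_right_of_isUnit_det _ _ hdet, hT]

end FullRowRank

section Polynomial

variable {ι κ : Type*}

lemma isPolyM_iff_exists_toRat (R : Matrix ι κ (RatFunc F)) : IsPolyM R ↔ ∃ P, toRat P = R := by
  constructor
  · intro h
    refine ⟨Matrix.of fun i j => (R i j).num, Matrix.ext fun i j => ?_⟩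
    conv_rhs => rw [← RatFunc.num_div_denom (R i j), h i j]
    simp [toRat]
  · rintro ⟨P, rfl⟩ i j
    exact RatFunc.denom_algebraMap _

lemma isPolyM_iff_forall_definedAt [IsAlgClosed F] (R : Matrix ι κ (RatFunc F)) :
    IsPolyM R ↔ ∀ a, DefinedAt R a :=
  ⟨fun h a i j => by simp [RDefinedAt, h i j],
    fun h i j => denom_eq_one_of_forall_rDefinedAt fun b => h b i j⟩

lemma isPolyM_mul_toRat_iff [IsAlgClosed F] {p m : ℕ} {T : Matrix (Fin p) (Fin m) F[X]}
    (hT : ∀ a, (polyEval T a).rank = p) {S : Matrix ι (Fin p) (RatFunc F)} :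
    IsPolyM (S * toRat T) ↔ IsPolyM S := by
  constructor
  · simp only [isPolyM_iff_forall_definedAt]
    exact fun h a => definedAt_of_definedAt_mul_toRat (hT a) (h a)
  · rw [isPolyM_iff_exists_toRat, isPolyM_iff_exists_toRat]
    rintro ⟨P, rfl⟩
    exact ⟨P * T, toRat_mul P T⟩

lemma IsPencilM.isPolyM {R : Matrix ι κ (RatFunc F)} (h : IsPencilM R) : IsPolyM R :=
  fun i j => (h i j).1

lemma isPencilM_toRat_iff (P : Matrix ι κ F[X]) : IsPencilM (toRat P) ↔ IsPencilP P := by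
  simp [IsPencilM, IsPencilP, toRat, RatFunc.denom_algebraMap, RatFunc.num_algebraMap]

lemma isPencilP_iff_natDegree_le (P : Matrix ι κ F[X]) :
    IsPencilP P ↔ ∀ i j, (P i j).natDegree ≤ 1 := by
  simp [IsPencilP, natDegree_le_iff_degree_le]

end Polynomial

section RowDegree

variable {p q m : ℕ}

lemma natDegree_le_rowDegM (K : Matrix (Fin p) (Fin m) F[X]) (i : Fin p) (j : Fin m) :
    (K i j).natDegree ≤ rowDegM K i :=
  Finset.le_sup (f := fun j => (K i j).natDegree) (Finset.mem_univ j)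

lemma isPencilP_iff_rowDegM_le (K : Matrix (Fin p) (Fin m) F[X]) :
    IsPencilP K ↔ ∀ i, rowDegM K i ≤ 1 := by
  simp [isPencilP_iff_natDegree_le, rowDegM]

lemma coeff_mul_apply_eq_sum_hrdMat {S : Matrix (Fin q) (Fin p) F[X]}
    {T : Matrix (Fin p) (Fin m) F[X]} {i : Fin q} {D : ℕ}
    (hD : ∀ j, S i j ≠ 0 → (S i j).natDegree + rowDegM T j ≤ D) (k : Fin m) :
    ((S * T) i k).coeff D = ∑ j, (S i j).coeff (D - rowDegM T j) * hrdMat T j k := by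
  rw [Matrix.mul_apply, finsetSum_coeff]
  refine Finset.sum_congr rfl fun j _ => ?_
  by_cases hS : S i j = 0
  · simp [hS]
  have hle := hD j hS
  conv_lhs => rw [show D = (D - rowDegM T j) + rowDegM T j by omega]
  exact coeff_mul_add_eq_of_natDegree_le (by omega) (natDegree_le_rowDegM T j k)

/-- The predictable degree property of row-reduced polynomial matrices. -/
theorem natDegree_add_rowDegM_le_rowDegM_mul {T : Matrix (Fin p) (Fin m) F[X]}
    (hT : (hrdMat T).rank = p) {S : Matrix (Fin q) (Fin p) F[X]} {i : Fin q} {j : Fin p}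
    (hij : S i j ≠ 0) : (S i j).natDegree + rowDegM T j ≤ rowDegM (S * T) i := by
  classical
  set d : Fin p → ℕ := fun j => (S i j).natDegree + rowDegM T j
  set J := Finset.univ.filter fun j => S i j ≠ 0
  obtain ⟨j₀, hj₀, hmax⟩ := Finset.exists_mem_eq_sup J ⟨j, by simp [J, hij]⟩ d
  set D := J.sup d
  have hD : ∀ j, S i j ≠ 0 → d j ≤ D := fun j hj => Finset.le_sup (by simp [J, hj])
  -- the coefficient of `λ^D` in row `i` of `S * T` is `v * hrdMat T`,
  -- and `v j₀` is a leading coefficient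
  set v : Fin p → F := fun j => (S i j).coeff (D - rowDegM T j)
  have hv : v j₀ ≠ 0 := by
    simp only [v, hmax, d, Nat.add_sub_cancel]
    exact leadingCoeff_ne_zero.mpr (by simpa [J] using hj₀)
  obtain ⟨k, hk⟩ : ∃ k, ((S * T) i k).coeff D ≠ 0 := by
    by_contra! h
    have hcomb : ∑ j, v j • hrdMat T j = 0 := funext fun k => by
      simpa [coeff_mul_apply_eq_sum_hrdMat hD, Finset.sum_apply, v] using h k
    exact hv (Fintype.linearIndependent_iff.mp (linearIndependent_rows_of_rank_eq hT) v hcomb j₀)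
  calc d j ≤ D := hD j hij
    _ ≤ ((S * T) i k).natDegree := le_natDegree_of_ne_zero hk
    _ ≤ rowDegM (S * T) i := natDegree_le_rowDegM _ _ _

lemma isPencilP_of_isPencilP_mul {T : Matrix (Fin p) (Fin m) F[X]} (hT : (hrdMat T).rank = p)
    {S : Matrix (Fin p) (Fin p) F[X]} (hS : S.det ≠ 0) (h : IsPencilP (S * T)) :
    IsPencilP S ∧ IsPencilP T := by
  rw [isPencilP_iff_rowDegM_le] at h
  have hbound {i j} (hij : S i j ≠ 0) : (S i j).natDegree + rowDegM T j ≤ 1 :=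
    (natDegree_add_rowDegM_le_rowDegM_mul hT hij).trans (h i)
  refine ⟨(isPencilP_iff_natDegree_le S).mpr fun i j => ?_,
    (isPencilP_iff_rowDegM_le T).mpr fun j => ?_⟩
  · by_cases hij : S i j = 0
    · simp [hij]
    · exact (Nat.le_add_right _ _).trans (hbound hij)
  · obtain ⟨i, hij⟩ : ∃ i, S i j ≠ 0 := by
      by_contra! hcol
      exact hS (Matrix.det_eq_zero_of_column_eq_zero j hcol)
    exact (Nat.le_add_left _ _).trans (hbound hij)

end RowDegree

end RM

open RM

/-- Let `R` be a rational matrix of full row normal rank and `T` a minimal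
basis of the row space of `R`. Then: (a) there is a unique regular rational matrix `S` with
`R = S T`; (b) for any `Σ ⊆ F`, `R` has full row rank in `Σ` iff `S` is regular in `Σ`;
(c) `R` is a polynomial matrix iff `S` is; (d) if `R` is a matrix pencil then `S` and `T` are
matrix pencils. -/
theorem minimalBasis_factorization {F : Type*} [Field F] [IsAlgClosed F] {p m : ℕ}
    (R : Matrix (Fin p) (Fin m) (RatFunc F)) (hR : R.rank = p)
    (T : Matrix (Fin p) (Fin m) (Polynomial F)) (hT : RM.IsMinimalBasis T)
    (hspan : Submodule.span (RatFunc F) (Set.range (RM.toRat T)) =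
      Submodule.span (RatFunc F) (Set.range R)) :
    (∃! S : Matrix (Fin p) (Fin p) (RatFunc F), S.det ≠ 0 ∧ R = S * RM.toRat T) ∧
    (∀ S : Matrix (Fin p) (Fin p) (RatFunc F), S.det ≠ 0 → R = S * RM.toRat T →
      ((∀ Sig : Set F, RM.FullRowRankOn R Sig ↔ RM.RegularOn S Sig) ∧
        (RM.IsPolyM R ↔ RM.IsPolyM S) ∧
        (RM.IsPencilM R → RM.IsPencilM S ∧ RM.IsPencilP T))) := by
  obtain ⟨hTrank, hTred⟩ := hT
  obtain ⟨S₀, hS₀⟩ := exists_eq_mul_of_span_le hspan.ge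
  have hdet₀ : S₀.det ≠ 0 := (isUnit_det_of_rank_mul_eq (hS₀ ▸ hR)).ne_zero
  refine ⟨⟨S₀, ⟨hdet₀, hS₀⟩, fun S hS => mul_toRat_right_cancel (hTrank 0) (hS.2.symm.trans hS₀)⟩,
    ?_⟩
  rintro S hdet rfl
  refine ⟨fun Sig => forall₂_congr fun a _ => fullRowRankAt_mul_toRat_iff (hTrank a),
    isPolyM_mul_toRat_iff hTrank, fun hpencil => ?_⟩
  obtain ⟨P, rfl⟩ :=
    (isPolyM_iff_exists_toRat S).mp ((isPolyM_mul_toRat_iff hTrank).mp hpencil.isPolyM)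
  rw [← toRat_mul, isPencilM_toRat_iff] at hpencil
  rw [isPencilM_toRat_iff]
  exact isPencilP_of_isPencilP_mul hTred (fun h => hdet (by rw [det_toRat, h, map_zero])) hpencil
end
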